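/- Recurrence formula for the eigenvalues: for all integers n ≥ 0 and ℓ ≥ 0, λ(n,ℓ+1) = ((2ℓ+1)/(ℓ+1)) · (ν/(1+ν)) · λ(n,ℓ) + ((2ℓ+1)/((ℓ+1)(1+ν))) · λ(n+1,ℓ) − (ℓ/(ℓ+1)) · λ(n+1,ℓ−1), where ν = 1−2κ and the last term is interpreted as 0 when ℓ = 0. -/

import Mathlib

open MeasureTheory Real

noncomputable section

/-- The `ℓ`-th Legendre polynomial, via Rodrigues' formula
`P_ℓ(x) = (1/(2^ℓ ℓ!)) (d/dx)^ℓ (x²-1)^ℓ`. -/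
noncomputable def legendreP (l : ℕ) : Polynomial ℝ :=
  ((2 ^ l * l.factorial : ℝ)⁻¹) • (Polynomial.derivative^[l] ((Polynomial.X ^ 2 - 1) ^ l))

/-- The eigenvalues `λ(n,ℓ)` of the linear Maxwell-molecules collision operator:
`λ(n,ℓ) = 1 - (1/(2κ(1-κ))) ∫_{1-2κ}^1 s^(2n+ℓ+1) P_ℓ((1-2κ+s²)/((2-2κ)s)) ds`. -/
noncomputable def lamEV (κ : ℝ) (n l : ℕ) : ℝ :=
  1 - (1 / (2 * κ * (1 - κ))) *
    ∫ s in (1 - 2 * κ)..1,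
      s ^ (2 * n + l + 1) * (legendreP l).eval ((1 - 2 * κ + s ^ 2) / ((2 - 2 * κ) * s))

/-!
Bonnet's recurrence `(ℓ+1) P_{ℓ+1}(x) = (2ℓ+1) x P_ℓ(x) - ℓ P_{ℓ-1}(x)`, taken at
`x = (ν + s²)/((1+ν) s)` and multiplied by `s^(2n+ℓ+2)`, turns `s x` into `(ν + s²)/(1+ν)` and
so writes the integrand of `λ(n,ℓ+1)` as a combination of those of `λ(n,ℓ)`, `λ(n+1,ℓ)` and
`λ(n+1,ℓ-1)`; the constant terms of the `λ`s match because the coefficients add up to `1`.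
Bonnet's recurrence follows from Rodrigues' formula via `P'_{ℓ+1} = X P'_ℓ + (ℓ+1) P_ℓ` and
`(X² - 1) P'_ℓ = (ℓ+1)(P_{ℓ+1} - X P_ℓ)`. The integrands are polynomials in `s`, hence integrable.
-/

open Polynomial

namespace Polynomial

theorem iterate_derivative_succ_X_mul {R : Type*} [CommSemiring R] (n : ℕ) (f : R[X]) :
    derivative^[n + 1] (X * f) = X * derivative^[n + 1] f + (n + 1 : R[X]) * derivative^[n] f := by
  rw [mul_comm, iterate_derivative_mul_X, Nat.add_sub_cancel, nsmul_eq_mul]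
  push_cast
  ring

variable {R : Type*} [CommRing R]

theorem iterate_derivative_succ_succ_X_sq_sub_one_mul (n : ℕ) (f : R[X]) :
    derivative^[n + 2] ((X ^ 2 - 1) * f) =
      (X ^ 2 - 1) * derivative^[n + 2] f + 2 * (n + 2 : R[X]) * X * derivative^[n + 1] f +
        ((n : R[X]) + 1) * ((n : R[X]) + 2) * derivative^[n] f := by
  have h₁ := iterate_derivative_succ_X_mul (n + 1) (X * f)
  have h₂ := iterate_derivative_succ_X_mul (n + 1) f
  have h₃ := iterate_derivative_succ_X_mul n f
  push_cast at h₁ h₂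
  rw [sub_mul, one_mul, sq, mul_assoc, iterate_derivative_sub]
  linear_combination h₁ + X * h₂ + (n + 2 : R[X]) * h₃

theorem derivative_X_sq_sub_one_pow_succ (l : ℕ) :
    derivative (((X : R[X]) ^ 2 - 1) ^ (l + 1)) =
      ((2 * (l + 1) : ℕ) : R[X]) * (X * (X ^ 2 - 1) ^ l) := by
  rw [derivative_pow]
  simp only [derivative_sub, derivative_X_pow, derivative_one, Nat.add_sub_cancel, map_natCast]
  push_cast
  ring

theorem X_sq_sub_one_mul_iterate_derivative_X_sq_sub_one_pow (m : ℕ) :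
    ((X : R[X]) ^ 2 - 1) * derivative^[m + 2] ((X ^ 2 - 1) ^ (m + 1)) =
      ((m : R[X]) + 1) * ((m : R[X]) + 2) * derivative^[m] ((X ^ 2 - 1) ^ (m + 1)) := by
  have h₁ := iterate_derivative_succ_succ_X_sq_sub_one_mul m (((X : R[X]) ^ 2 - 1) ^ (m + 1))
  have h₂ := iterate_derivative_succ_X_mul m (((X : R[X]) ^ 2 - 1) ^ (m + 1))
  rw [← pow_succ', Function.iterate_succ_apply, derivative_X_sq_sub_one_pow_succ,
    iterate_derivative_natCast_mul, h₂] at h₁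
  push_cast at h₁
  linear_combination -h₁

end Polynomial

theorem legendreP_eq_C_mul (l : ℕ) :
    legendreP l = C (2 ^ l * l.factorial : ℝ)⁻¹ * derivative^[l] ((X ^ 2 - 1) ^ l) :=
  smul_eq_C_mul _

theorem legendreP_succ (l : ℕ) :
    legendreP (l + 1) = C (2 ^ l * l.factorial : ℝ)⁻¹ * derivative^[l] (X * (X ^ 2 - 1) ^ l) := by
  rw [legendreP_eq_C_mul, Function.iterate_succ_apply, derivative_X_sq_sub_one_pow_succ,
    iterate_derivative_natCast_mul, ← mul_assoc, ← C_eq_natCast, ← map_mul]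
  congr 2
  push_cast [Nat.factorial_succ]
  field_simp
  ring

@[simp]
theorem legendreP_zero : legendreP 0 = 1 := by
  simp [legendreP_eq_C_mul]

@[simp]
theorem legendreP_one : legendreP 1 = X := by
  simp [legendreP_succ]

theorem derivative_legendreP_succ (l : ℕ) :
    derivative (legendreP (l + 1)) =
      X * derivative (legendreP l) + (l + 1 : ℝ[X]) * legendreP l := by
  rw [legendreP_succ, derivative_C_mul, ← Function.iterate_succ_apply' derivative,
    iterate_derivative_succ_X_mul, legendreP_eq_C_mul l, derivative_C_mul,
    ← Function.iterate_succ_apply' derivative]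
  ring

theorem X_sq_sub_one_mul_derivative_legendreP (l : ℕ) :
    (X ^ 2 - 1) * derivative (legendreP l) =
      (l + 1 : ℝ[X]) * (legendreP (l + 1) - X * legendreP l) := by
  cases l with
  | zero => simp
  | succ m =>
    have h := X_sq_sub_one_mul_iterate_derivative_X_sq_sub_one_pow (R := ℝ) m
    rw [legendreP_succ (m + 1), legendreP_eq_C_mul (m + 1), derivative_C_mul,
      ← Function.iterate_succ_apply' derivative, iterate_derivative_succ_X_mul]
    push_cast
    linear_combination C (2 ^ (m + 1) * (m + 1).factorial : ℝ)⁻¹ * h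

theorem legendreP_succ_succ (l : ℕ) :
    (l + 2 : ℝ[X]) * legendreP (l + 2) =
      (2 * l + 3 : ℝ[X]) * X * legendreP (l + 1) - (l + 1 : ℝ[X]) * legendreP l := by
  have h₁ := X_sq_sub_one_mul_derivative_legendreP (l + 1)
  have h₂ := X_sq_sub_one_mul_derivative_legendreP l
  have h₃ := derivative_legendreP_succ l
  push_cast at h₁
  linear_combination (X ^ 2 - 1 : ℝ[X]) * h₃ - h₁ + X * h₂

theorem natDegree_legendreP_le (l : ℕ) : (legendreP l).natDegree ≤ l := by
  rw [legendreP_eq_C_mul]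
  refine (natDegree_C_mul_le _ _).trans <| (natDegree_iterate_derivative _ _).trans ?_
  have h : ((X : ℝ[X]) ^ 2 - 1).natDegree ≤ 2 := (natDegree_sub_le _ _).trans (by simp)
  have := natDegree_pow_le_of_le l h
  omega

theorem eval_legendreP_succ (l : ℕ) (x : ℝ) :
    (l + 1) * (legendreP (l + 1)).eval x =
      (2 * l + 1) * x * (legendreP l).eval x - l * (legendreP (l - 1)).eval x := by
  cases l with
  | zero => simp
  | succ m =>
    have h := congrArg (eval x) (legendreP_succ_succ m)
    simp only [eval_mul, eval_sub, eval_add, eval_natCast, eval_ofNat, eval_X, eval_one] at h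
    push_cast [Nat.add_sub_cancel]
    linear_combination h

/-- With the junk value `q.eval 0 / 0 = 0` both sides of the polynomial identity below vanish at
`s = 0`, so the function is a polynomial on all of `K`, not only away from `0`. -/
theorem continuous_pow_succ_mul_eval_div {K : Type*} [Field K] [TopologicalSpace K]
    [IsTopologicalSemiring K] {p : K[X]} {j : ℕ} (hp : p.natDegree ≤ j) (q : K[X]) :
    Continuous fun s : K => s ^ (j + 1) * p.eval (q.eval s / s) := by
  refine (Polynomial.continuous
    (∑ k ∈ Finset.range (j + 1), C (p.coeff k) * q ^ k * X ^ (j + 1 - k))).congr fun s => ?_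
  rw [eval_eq_sum_range' (Nat.lt_succ_of_le hp), Finset.mul_sum, eval_finsetSum]
  refine Finset.sum_congr rfl fun k hk => ?_
  have hk : k < j + 1 := Finset.mem_range.mp hk
  simp only [eval_mul, eval_C, eval_pow, eval_X]
  rcases eq_or_ne s 0 with rfl | hs
  · simp [zero_pow (by omega : j + 1 - k ≠ 0)]
  · rw [div_pow, ← pow_sub_mul_pow s hk.le]
    field_simp

def lamIntegrand (ν c : ℝ) (n l : ℕ) (s : ℝ) : ℝ :=
  s ^ (2 * n + l + 1) * (legendreP l).eval ((ν + s ^ 2) / (c * s))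

theorem lamEV_eq_integral_lamIntegrand (κ : ℝ) (n l : ℕ) :
    lamEV κ n l =
      1 - 1 / (2 * κ * (1 - κ)) *
        ∫ s in (1 - 2 * κ)..1, lamIntegrand (1 - 2 * κ) (2 - 2 * κ) n l s :=
  rfl

theorem continuous_lamIntegrand (ν c : ℝ) (n l : ℕ) : Continuous (lamIntegrand ν c n l) := by
  have h := continuous_pow_succ_mul_eval_div (natDegree_legendreP_le l) (C c⁻¹ * (C ν + X ^ 2))
  refine ((continuous_pow (2 * n)).mul h).congr fun s => ?_
  simp only [lamIntegrand, Pi.mul_apply, eval_mul, eval_C, eval_add, eval_pow, eval_X]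
  rw [← mul_assoc, ← pow_add, inv_mul_eq_div, div_mul_eq_div_div]
  rfl

theorem lamIntegrand_recurrence (ν c : ℝ) (n l : ℕ) (s : ℝ) :
    (l + 1) * lamIntegrand ν c n (l + 1) s =
      (2 * l + 1) * ν / c * lamIntegrand ν c n l s +
        (2 * l + 1) / c * lamIntegrand ν c (n + 1) l s -
          l * lamIntegrand ν c (n + 1) (l - 1) s := by
  rcases eq_or_ne s 0 with rfl | hs
  · simp [lamIntegrand]
  have hx : s * ((ν + s ^ 2) / (c * s)) = (ν + s ^ 2) / c := by
    rw [div_mul_eq_div_div, mul_div_cancel₀ _ hs]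
  have hl : (l : ℝ) * s ^ (2 * (n + 1) + (l - 1) + 1) = l * s ^ (2 * n + l + 2) := by
    cases l with
    | zero => simp
    | succ m => rw [Nat.add_sub_cancel]; ring_nf
  have h := eval_legendreP_succ l ((ν + s ^ 2) / (c * s))
  simp only [lamIntegrand, ← mul_assoc, hl]
  linear_combination s ^ (2 * n + l + 2) * h +
    (2 * l + 1) * s ^ (2 * n + l + 1) * (legendreP l).eval ((ν + s ^ 2) / (c * s)) * hx

theorem integral_lamIntegrand_recurrence (ν c a b : ℝ) (n l : ℕ) :
    ∫ s in a..b, lamIntegrand ν c n (l + 1) s =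
      (2 * l + 1) / (l + 1) * (ν / c) * (∫ s in a..b, lamIntegrand ν c n l s) +
        (2 * l + 1) / ((l + 1) * c) * (∫ s in a..b, lamIntegrand ν c (n + 1) l s) -
          l / (l + 1) * ∫ s in a..b, lamIntegrand ν c (n + 1) (l - 1) s := by
  have hi (m j : ℕ) : IntervalIntegrable (lamIntegrand ν c m j) volume a b :=
    (continuous_lamIntegrand ν c m j).intervalIntegrable a b
  have hl : (l : ℝ) + 1 ≠ 0 := by positivity
  rw [← mul_right_inj' hl, ← intervalIntegral.integral_const_mul,
    intervalIntegral.integral_congr fun s _ => lamIntegrand_recurrence ν c n l s,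
    intervalIntegral.integral_sub (((hi _ _).const_mul _).add ((hi _ _).const_mul _))
      ((hi _ _).const_mul _),
    intervalIntegral.integral_add ((hi _ _).const_mul _) ((hi _ _).const_mul _)]
  simp only [intervalIntegral.integral_const_mul]
  field_simp

/-- Recurrence formula for the eigenvalues: for all `n, ℓ ≥ 0`,
`λ(n,ℓ+1) = ((2ℓ+1)/(ℓ+1))(ν/(1+ν)) λ(n,ℓ) + ((2ℓ+1)/((ℓ+1)(1+ν))) λ(n+1,ℓ)
  - (ℓ/(ℓ+1)) λ(n+1,ℓ-1)`, the last term being `0` when `ℓ = 0`. -/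
theorem lamEV_recurrence (κ : ℝ) (hκ : κ ∈ Set.Ioo (0 : ℝ) 1) (ν : ℝ) (hν : ν = 1 - 2 * κ)
    (n l : ℕ) :
    lamEV κ n (l + 1) =
      ((2 * l + 1 : ℝ) / (l + 1)) * (ν / (1 + ν)) * lamEV κ n l +
        ((2 * l + 1 : ℝ) / ((l + 1) * (1 + ν))) * lamEV κ (n + 1) l -
          ((l : ℝ) / (l + 1)) * lamEV κ (n + 1) (l - 1) := by
  have hc : 2 - 2 * κ = 1 + ν := by rw [hν]; ring
  have hc₀ : 1 + ν ≠ 0 := by rw [← hc]; linarith [hκ.2]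
  have hl : (l : ℝ) + 1 ≠ 0 := by positivity
  have hcoeff : (2 * l + 1 : ℝ) / (l + 1) * (ν / (1 + ν)) + (2 * l + 1) / ((l + 1) * (1 + ν)) -
      l / (l + 1) = 1 := by
    field_simp
    ring
  simp only [lamEV_eq_integral_lamIntegrand, ← hν, hc]
  linear_combination -(1 / (2 * κ * (1 - κ))) *
    integral_lamIntegrand_recurrence ν (1 + ν) ν 1 n l - hcoeff
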